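/- arXiv:2208.10234 — 8 statements merged into one kernel-verified Lean document; each statement's English description precedes it below -/
import Mathlib

section
/- Let (t_k) be a strictly increasing sequence with T_min ≤ t_{k+1} − t_k ≤ T_max, and let D^N be the nonuniform divided-difference operator defined recursively by D^0 f[k] = f(t_k) and D^N f[k] = (D^{N−1}f[k+1] − D^{N−1}f[k])/(t_{k+N} − t_k). If G is N-times differentiable with G' = g and ‖g^{(N−1)}‖_∞ ≤ Ω^{N−1}‖g‖_∞, then |D^N G[k]| ≤ (1/(Ω·N!)) · ((T_max/T_min)·Ω·e)^N · ‖g‖_∞ for all k. -/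
/-!
`D^N` annihilates polynomials of degree `< N`, so `D^N G[k]` is `D^N` of the Taylor remainder of
`G` of order `N` about the midpoint of `[t_k, t_{k+N}]`. At the nodes `t_k, …, t_{k+N}` this
remainder is at most `‖G^{(N)}‖_∞ (N T_max / 2)^N / N!`, and the `m`-th differencing step at most
doubles a bound while dividing by a gap `≥ m T_min`. This gives
`‖G^{(N)}‖_∞ (T_max / T_min)^N N^N / (N!)²`, and `N^N / N! ≤ e^N` by Stirling's inequality.
-/

/-- The nonuniform divided-difference operator on nodes `t`:
`D t f 0 k = f k`, `D t f (N+1) k = (D t f N (k+1) - D t f N k)/(t (k+N+1) - t k)`. -/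
noncomputable def nonUnifDiff (t : ℤ → ℝ) (f : ℤ → ℝ) : ℕ → ℤ → ℝ
  | 0 => f
  | N + 1 => fun k =>
      (nonUnifDiff t f N (k + 1) - nonUnifDiff t f N k) / (t (k + (N : ℤ) + 1) - t k)

open Finset Nat Set

section DividedDifference

variable (t : ℤ → ℝ)

lemma nonUnifDiff_succ (f : ℤ → ℝ) (N : ℕ) (k : ℤ) :
    nonUnifDiff t f (N + 1) k =
      (nonUnifDiff t f N (k + 1) - nonUnifDiff t f N k) / (t (k + N + 1) - t k) := rfl

lemma nonUnifDiff_sub (f g : ℤ → ℝ) (N : ℕ) (k : ℤ) :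
    nonUnifDiff t (fun j => f j - g j) N k = nonUnifDiff t f N k - nonUnifDiff t g N k := by
  induction N generalizing k with
  | zero => rfl
  | succ N ih => simp only [nonUnifDiff_succ, ih]; ring

lemma nonUnifDiff_sum {ι : Type*} (s : Finset ι) (a : ι → ℝ) (f : ι → ℤ → ℝ) (N : ℕ) (k : ℤ) :
    nonUnifDiff t (fun j => ∑ i ∈ s, a i * f i j) N k = ∑ i ∈ s, a i * nonUnifDiff t (f i) N k := by
  induction N generalizing k with
  | zero => rfl
  | succ N ih =>
    simp only [nonUnifDiff_succ, ih, ← sum_sub_distrib, sum_div, ← mul_sub, mul_div_assoc]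

lemma nonUnifDiff_const_succ (a : ℝ) (N : ℕ) (k : ℤ) :
    nonUnifDiff t (fun _ => a) (N + 1) k = 0 := by
  induction N generalizing k with
  | zero => simp [nonUnifDiff]
  | succ N ih => simp [nonUnifDiff_succ t _ (N + 1), ih]

variable {t}

lemma nonUnifDiff_succ_sub_mul (ht : Function.Injective t) (a : ℝ) (h : ℤ → ℝ) (n : ℕ) (k : ℤ) :
    nonUnifDiff t (fun j => (t j - a) * h j) (n + 1) k =
      (t k - a) * nonUnifDiff t h (n + 1) k + nonUnifDiff t h n (k + 1) := by
  have hne : ∀ (k : ℤ) (m : ℕ), t (k + m + 1) - t k ≠ 0 := fun k m =>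
    sub_ne_zero.2 (ht.ne (by omega))
  induction n generalizing k with
  | zero =>
    have := hne k 0
    simp only [nonUnifDiff, CharP.cast_eq_zero, add_zero] at this ⊢
    field_simp
    ring
  | succ n ih =>
    have hk := hne k (n + 1)
    have hk1 := hne (k + 1) n
    have hidx : k + 1 + (n : ℤ) + 1 = k + ((n + 1 : ℕ) : ℤ) + 1 := by push_cast; ring
    rw [hidx] at hk1
    rw [nonUnifDiff_succ, ih, ih, nonUnifDiff_succ t h (n + 1), nonUnifDiff_succ t h n (k + 1),
      hidx]
    field_simp
    ring

lemma nonUnifDiff_pow_sub_eq_zero (ht : Function.Injective t) (c : ℝ) {i N : ℕ} (hi : i < N)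
    (k : ℤ) : nonUnifDiff t (fun j => (t j - c) ^ i) N k = 0 := by
  induction i generalizing N k with
  | zero =>
    obtain ⟨m, rfl⟩ := Nat.exists_eq_add_of_lt hi
    simpa using nonUnifDiff_const_succ t 1 m k
  | succ i ih =>
    obtain ⟨m, rfl⟩ := Nat.exists_eq_add_of_lt hi
    have hpow : (fun j => (t j - c) ^ (i + 1)) = fun j => (t j - c) * (t j - c) ^ i :=
      funext fun j => pow_succ' _ _
    rw [hpow, show i + 1 + m + 1 = i + m + 1 + 1 by omega, nonUnifDiff_succ_sub_mul ht,
      ih (by omega), ih (by omega), mul_zero, zero_add]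

lemma nonUnifDiff_sum_pow_sub_eq_zero (ht : Function.Injective t) (a : ℕ → ℝ) (c : ℝ) (N : ℕ)
    (k : ℤ) : nonUnifDiff t (fun j => ∑ i ∈ range N, a i * (t j - c) ^ i) N k = 0 := by
  rw [nonUnifDiff_sum]
  refine sum_eq_zero fun i hi => ?_
  rw [nonUnifDiff_pow_sub_eq_zero ht c (mem_range.1 hi), mul_zero]

end DividedDifference

lemma natCast_mul_le_sub_of_le_sub_succ {u : ℤ → ℝ} {a : ℝ} (h : ∀ k, a ≤ u (k + 1) - u k)
    (k : ℤ) (n : ℕ) : n * a ≤ u (k + n) - u k := by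
  induction n with
  | zero => simp
  | succ n ih =>
    have := h (k + n)
    push_cast
    rw [← add_assoc]
    linarith

lemma sub_le_natCast_mul_of_sub_succ_le {u : ℤ → ℝ} {b : ℝ} (h : ∀ k, u (k + 1) - u k ≤ b)
    (k : ℤ) (n : ℕ) : u (k + n) - u k ≤ n * b := by
  have := natCast_mul_le_sub_of_le_sub_succ (u := fun k => -u k) (a := -b)
    (fun k => by linarith [h k]) k n
  linarith

lemma abs_nonUnifDiff_le {t : ℤ → ℝ} {Tmin : ℝ} (hTmin : 0 < Tmin)
    (hlow : ∀ k, Tmin ≤ t (k + 1) - t k) {f : ℤ → ℝ} {B : ℝ} (N : ℕ) (k : ℤ)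
    (hf : ∀ j, k ≤ j → j ≤ k + N → |f j| ≤ B) :
    |nonUnifDiff t f N k| ≤ 2 ^ N * B / (N ! * Tmin ^ N) := by
  induction N generalizing k with
  | zero => simpa [nonUnifDiff] using hf k le_rfl (by simp)
  | succ N ih =>
    have hB : 0 ≤ B := (abs_nonneg _).trans (hf k le_rfl (by omega))
    have h₁ := ih (k + 1) fun j hj₁ hj₂ => hf j (by omega) (by push_cast at hj₂ ⊢; omega)
    have h₀ := ih k fun j hj₁ hj₂ => hf j hj₁ (by push_cast at hj₂ ⊢; omega)
    have hgap : (N + 1) * Tmin ≤ t (k + N + 1) - t k := by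
      simpa [add_assoc] using natCast_mul_le_sub_of_le_sub_succ hlow k (N + 1)
    have hpos : 0 < t (k + N + 1) - t k := by nlinarith
    rw [nonUnifDiff_succ, abs_div, abs_of_pos hpos]
    calc |nonUnifDiff t f N (k + 1) - nonUnifDiff t f N k| / (t (k + N + 1) - t k)
        ≤ 2 * (2 ^ N * B / (N ! * Tmin ^ N)) / ((N + 1) * Tmin) := by
          gcongr
          exact (abs_sub _ _).trans (by linarith)
      _ = 2 ^ (N + 1) * B / ((N + 1)! * Tmin ^ (N + 1)) := by
          rw [Nat.factorial_succ]
          push_cast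
          field_simp
          ring

lemma abs_sub_sum_iteratedDeriv_le {f : ℝ → ℝ} {N : ℕ} (hf : ContDiff ℝ N f) {K : ℝ}
    (hK : ∀ y, |iteratedDeriv N f y| ≤ K) (c x : ℝ) :
    |f x - ∑ i ∈ range N, iteratedDeriv i f c / i ! * (x - c) ^ i| ≤ K * |x - c| ^ N / N ! := by
  rcases N with _ | n
  · simpa using hK x
  rcases eq_or_ne c x with rfl | hcx
  · simp [sum_range_succ']
  obtain ⟨y, -, hy⟩ := taylor_mean_remainder_lagrange_iteratedDeriv hcx hf.contDiffOn
  have hpoly : taylorWithinEval f n (uIcc c x) c x =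
      ∑ i ∈ range (n + 1), iteratedDeriv i f c / i ! * (x - c) ^ i := by
    rw [taylor_within_apply]
    refine sum_congr rfl fun i hi => ?_
    rw [iteratedDerivWithin_eq_iteratedDeriv (uniqueDiffOn_uIcc hcx)
      (hf.contDiffAt.of_le (by exact_mod_cast (mem_range.1 hi).le)) left_mem_uIcc, smul_eq_mul]
    ring
  rw [← hpoly, hy, abs_div, abs_mul, abs_pow, Nat.abs_cast]
  gcongr
  exact hK y

lemma abs_nonUnifDiff_comp_le {t : ℤ → ℝ} {Tmin Tmax : ℝ} (hTmin : 0 < Tmin)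
    (hlow : ∀ k, Tmin ≤ t (k + 1) - t k) (hup : ∀ k, t (k + 1) - t k ≤ Tmax)
    {f : ℝ → ℝ} {N : ℕ} (hf : ContDiff ℝ N f) {K : ℝ} (hK : ∀ y, |iteratedDeriv N f y| ≤ K)
    (k : ℤ) :
    |nonUnifDiff t (fun j => f (t j)) N k| ≤ K * (Tmax / Tmin) ^ N * (N ^ N / N !) / N ! := by
  have ht : StrictMono t := strictMono_int_of_lt_succ fun k => by linarith [hlow k]
  set c := (t k + t (k + N)) / 2 with hc
  set P : ℤ → ℝ := fun j => ∑ i ∈ range N, iteratedDeriv i f c / i ! * (t j - c) ^ i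
  have hK0 : 0 ≤ K := (abs_nonneg _).trans (hK 0)
  have hnode : ∀ j, k ≤ j → j ≤ k + N → |f (t j) - P j| ≤ K * (N * Tmax / 2) ^ N / N ! := by
    intro j hkj hjN
    have hwidth := sub_le_natCast_mul_of_sub_succ_le hup k N
    have hmid : |t j - c| ≤ N * Tmax / 2 := by
      rw [abs_le]
      constructor <;> linarith [ht.monotone hkj, ht.monotone hjN]
    calc |f (t j) - P j| ≤ K * |t j - c| ^ N / N ! := abs_sub_sum_iteratedDeriv_le hf hK c (t j)
      _ ≤ K * (N * Tmax / 2) ^ N / N ! := by gcongr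
  calc |nonUnifDiff t (fun j => f (t j)) N k|
      = |nonUnifDiff t (fun j => f (t j) - P j) N k| := by
        rw [nonUnifDiff_sub, nonUnifDiff_sum_pow_sub_eq_zero ht.injective, sub_zero]
    _ ≤ 2 ^ N * (K * (N * Tmax / 2) ^ N / N !) / (N ! * Tmin ^ N) :=
        abs_nonUnifDiff_le hTmin hlow N k hnode
    _ = K * (Tmax / Tmin) ^ N * (N ^ N / N !) / N ! := by
        simp only [div_pow, mul_pow]
        field_simp

theorem bound_nonUnifDiff_of_antiderivative_general
    (t : ℤ → ℝ) (Tmin Tmax Ω M : ℝ)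
    (hTmin : 0 < Tmin) (hΩ : 0 < Ω)
    (hspace : ∀ k : ℤ, Tmin ≤ t (k + 1) - t k ∧ t (k + 1) - t k ≤ Tmax)
    (G g : ℝ → ℝ) (N : ℕ) (hN : 1 ≤ N)
    (hG : ContDiff ℝ (N : ℕ∞) G)
    (hG' : deriv G = g)
    (hbern : ∀ s : ℝ, |iteratedDeriv (N - 1) g s| ≤ Ω ^ (N - 1) * M) :
    ∀ k : ℤ, |nonUnifDiff t (fun j => G (t j)) N k| ≤
      (1 / (Ω * (N.factorial : ℝ))) * ((Tmax / Tmin) * Ω * Real.exp 1) ^ N * M := by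
  intro k
  obtain ⟨n, rfl⟩ : ∃ n, N = n + 1 := ⟨N - 1, by omega⟩
  simp only [Nat.add_sub_cancel] at hbern
  have hK : ∀ y, |iteratedDeriv (n + 1) G y| ≤ Ω ^ n * M := by
    simpa only [iteratedDeriv_succ', hG'] using hbern
  have hM : 0 ≤ M := nonneg_of_mul_nonneg_right ((abs_nonneg _).trans (hK 0)) (pow_pos hΩ n)
  have hTmax : 0 < Tmax := hTmin.trans_le ((hspace 0).1.trans (hspace 0).2)
  calc |nonUnifDiff t (fun j => G (t j)) (n + 1) k|
      ≤ Ω ^ n * M * (Tmax / Tmin) ^ (n + 1) * ((n + 1 : ℕ) ^ (n + 1) / (n + 1)!) / (n + 1)! :=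
        abs_nonUnifDiff_comp_le hTmin (fun k => (hspace k).1) (fun k => (hspace k).2) hG hK k
    _ ≤ Ω ^ n * M * (Tmax / Tmin) ^ (n + 1) * Real.exp 1 ^ (n + 1) / (n + 1)! := by
        rw [← Real.exp_nat_mul, mul_one]
        gcongr
        exact Real.pow_div_factorial_le_exp _ (Nat.cast_nonneg _) _
    _ = 1 / (Ω * ((n + 1).factorial : ℝ)) * (Tmax / Tmin * Ω * Real.exp 1) ^ (n + 1) * M := by
        field_simp
        ring

/-- bound on the nonuniform divided difference of the
antiderivative `G` of a bounded function `g` satisfying a Bernstein-type bound. -/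
theorem bound_nonUnifDiff_of_antiderivative
    (t : ℤ → ℝ) (Tmin Tmax Ω M : ℝ)
    (hTmin : 0 < Tmin) (hΩ : 0 < Ω)
    (hspace : ∀ k : ℤ, Tmin ≤ t (k + 1) - t k ∧ t (k + 1) - t k ≤ Tmax)
    (G g : ℝ → ℝ) (N : ℕ) (hN : 1 ≤ N)
    (hG : ContDiff ℝ (N : ℕ∞) G)
    (hG' : deriv G = g)
    (hbnd : ∀ s : ℝ, |g s| ≤ M)
    (hbern : ∀ s : ℝ, |iteratedDeriv (N - 1) g s| ≤ Ω ^ (N - 1) * M) :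
    ∀ k : ℤ, |nonUnifDiff t (fun j => G (t j)) N k| ≤
      (1 / (Ω * (N.factorial : ℝ))) * ((Tmax / Tmin) * Ω * Real.exp 1) ^ N * M :=
  bound_nonUnifDiff_of_antiderivative_general t Tmin Tmax Ω M hTmin hΩ hspace G g N hN hG hG' hbern
end

section
/- For the sequences μ_l^N and β_l^N defined by μ_l^2[k] = 1_{{l−1}}(k)/(t_{k+2}−t_k), β_l^2[k] = 1_{{l}}(k)/(t_{k+2}−t_k) and the divided-difference recursion, the supports satisfy supp μ_l^N = {l−N+1, …, l−1} and supp β_l^N = {l−N+2, …, l} for all N ≥ 2. -/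
/-- Iterates the divided-difference recursion starting from order `2`:
`liftTwo t f m` is the order-`(2+m)` sequence obtained from the order-`2` sequence `f`,
so that the step from order `N = m+2` to order `N+1` divides by `t (k+N+1) - t k`. -/
noncomputable def liftTwo (t : ℤ → ℝ) (f : ℤ → ℝ) : ℕ → ℤ → ℝ
  | 0 => f
  | m + 1 => fun k =>
      (liftTwo t f m (k + 1) - liftTwo t f m k) / (t (k + (m : ℤ) + 3) - t k)

/-- `μ_K^N`, defined for `N ≥ 2` from `μ_K^2[k] = 1_{{K−1}}(k)/(t_{k+2}−t_k)`. -/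
noncomputable def muSeq (t : ℤ → ℝ) (K : ℤ) (N : ℕ) : ℤ → ℝ :=
  liftTwo t (fun k => if k = K - 1 then 1 / (t (k + 2) - t k) else 0) (N - 2)

/-- `β_K^N`, defined for `N ≥ 2` from `β_K^2[k] = 1_{{K}}(k)/(t_{k+2}−t_k)`. -/
noncomputable def betaSeq (t : ℤ → ℝ) (K : ℤ) (N : ℕ) : ℤ → ℝ :=
  liftTwo t (fun k => if k = K then 1 / (t (k + 2) - t k) else 0) (N - 2)

/-- Alternating-sign support predicate: `f` vanishes outside `Icc a b` and
`(-1)^(k-a) * f k > 0` on `Icc a b`. -/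
def SignSupp (f : ℤ → ℝ) (a b : ℤ) : Prop :=
  (∀ k, a ≤ k → k ≤ b → 0 < (-1 : ℝ) ^ (k - a) * f k) ∧
  (∀ k, k < a ∨ b < k → f k = 0)

lemma signSupp_step (f : ℤ → ℝ) (d : ℤ → ℝ) (hd : ∀ k, 0 < d k) (a b : ℤ)
    (hab : a ≤ b) (h : SignSupp f a b) :
    SignSupp (fun k => (f (k + 1) - f k) / d k) (a - 1) b := by
  obtain ⟨hpos, hzero⟩ := h
  constructor
  · intro k hk1 hk2
    have hA : 0 ≤ (-1 : ℝ) ^ (k + 1 - a) * f (k + 1) ∨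
        0 < (-1 : ℝ) ^ (k + 1 - a) * f (k + 1) := by
      rcases le_or_gt (k + 1) b with h' | h'
      · exact Or.inr (hpos (k + 1) (by omega) h')
      · exact Or.inl (by rw [hzero (k + 1) (Or.inr h')]; simp)
    have hB : 0 ≤ (-1 : ℝ) ^ (k - a) * f k ∨ 0 < (-1 : ℝ) ^ (k - a) * f k := by
      rcases lt_or_ge k a with h' | h'
      · exact Or.inl (by rw [hzero k (Or.inl h')]; simp)
      · exact Or.inr (hpos k h' hk2)
    have hAB : 0 < (-1 : ℝ) ^ (k + 1 - a) * f (k + 1) + (-1 : ℝ) ^ (k - a) * f k := by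
      rcases le_or_gt (k + 1) b with h' | h'
      · have := hpos (k + 1) (by omega) h'
        rcases hB with hB | hB <;> linarith
      · have hk : k = b := by omega
        have := hpos k (by omega) (by omega)
        have hz : f (k + 1) = 0 := hzero (k + 1) (Or.inr (by omega))
        rw [hz]; simpa using this
    have e1 : (-1 : ℝ) ^ (k - (a - 1)) * ((f (k + 1) - f k) / d k)
        = ((-1 : ℝ) ^ (k + 1 - a) * f (k + 1) + (-1 : ℝ) ^ (k - a) * f k) / d k := by
      rw [show k - (a - 1) = (k - a) + 1 by ring, show k + 1 - a = (k - a) + 1 by ring,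
        zpow_add_one₀ (by norm_num : (-1 : ℝ) ≠ 0)]
      ring
    simpa [e1] using div_pos hAB (hd k)
  · intro k hk
    have h1 : f k = 0 := hzero k (by omega)
    have h2 : f (k + 1) = 0 := hzero (k + 1) (by omega)
    simp [h1, h2]

lemma signSupp_liftTwo (t : ℤ → ℝ) (ht : StrictMono t) (f : ℤ → ℝ) (a b : ℤ)
    (hab : a ≤ b) (h : SignSupp f a b) :
    ∀ m : ℕ, SignSupp (liftTwo t f m) (a - m) b := by
  intro m
  induction m with
  | zero => simpa [liftTwo] using h
  | succ m ih =>
    have hstep := signSupp_step (liftTwo t f m) (fun k => t (k + (m : ℤ) + 3) - t k)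
      (fun k => sub_pos.2 (ht (by omega))) (a - m) b (by omega) ih
    have : liftTwo t f (m + 1) = fun k =>
        (liftTwo t f m (k + 1) - liftTwo t f m k) / (t (k + (m : ℤ) + 3) - t k) := rfl
    rw [this, show (a - ((m : ℕ) + 1 : ℕ) : ℤ) = a - (m : ℤ) - 1 by push_cast; ring]
    exact hstep

lemma signSupp_support (f : ℤ → ℝ) (a b : ℤ) (h : SignSupp f a b) :
    {k : ℤ | f k ≠ 0} = Set.Icc a b := by
  ext k
  simp only [Set.mem_setOf_eq, Set.mem_Icc]
  constructor
  · intro hk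
    by_contra hc
    push_neg at hc
    rcases lt_or_ge k a with h' | h'
    · exact hk (h.2 k (Or.inl h'))
    · exact hk (h.2 k (Or.inr (hc h')))
  · rintro ⟨h1, h2⟩ h0
    have := h.1 k h1 h2
    rw [h0] at this
    simp at this

/-- the supports of `μ_l^N` and `β_l^N` are
`{l−N+1, …, l−1}` and `{l−N+2, …, l}` respectively, for all `N ≥ 2`. -/
theorem support_muSeq_betaSeq
    (t : ℤ → ℝ) (ht : StrictMono t) (l : ℤ) (N : ℕ) (hN : 2 ≤ N) :
    {k : ℤ | muSeq t l N k ≠ 0} = Set.Icc (l - (N : ℤ) + 1) (l - 1) ∧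
    {k : ℤ | betaSeq t l N k ≠ 0} = Set.Icc (l - (N : ℤ) + 2) l := by
  have hcast : ((N - 2 : ℕ) : ℤ) = (N : ℤ) - 2 := by omega
  have hsingle : ∀ c : ℤ, SignSupp (fun k => if k = c then 1 / (t (k + 2) - t k) else 0) c c := by
    intro c
    constructor
    · intro k hk1 hk2
      have hk : k = c := le_antisymm hk2 hk1
      subst hk
      have hpos' : 0 < t (k + 2) - t k := sub_pos.2 (ht (by omega))
      simp only [if_pos rfl, sub_self, zpow_zero, one_mul]
      exact div_pos one_pos hpos'
    · intro k hk
      have : k ≠ c := by omega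
      simp [this]
  constructor
  · have h := signSupp_liftTwo t ht _ (l - 1) (l - 1) le_rfl (hsingle (l - 1)) (N - 2)
    have := signSupp_support _ _ _ h
    rw [show (l - 1 - ((N - 2 : ℕ) : ℤ)) = l - (N : ℤ) + 1 by omega] at this
    exact this
  · have h := signSupp_liftTwo t ht _ l l le_rfl (hsingle l) (N - 2)
    have := signSupp_support _ _ _ h
    rw [show (l - ((N - 2 : ℕ) : ℤ)) = l - (N : ℤ) + 2 by omega] at this
    exact this
end

section
/- For the sequences μ_l^N, β_l^N defined via the nonuniform divided-difference recursion from μ_l^2[k] = 1_{{l−1}}(k)/(t_{k+2}−t_k), β_l^2[k] = 1_{{l}}(k)/(t_{k+2}−t_k): consecutive values of μ_l^N (and of β_l^N) have non-strictly opposite signs, i.e. sign(μ_l^N[k])·sign(μ_l^N[k+1]) ≤ 0, sign(β_l^N[k])·sign(β_l^N[k+1]) ≤ 0, and sign(μ_l^N[k])·sign(β_l^N[k]) ≤ 0 for all k ∈ ℤ and N ≥ 2. -/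
/-!
Multiplying by `(-1)^(c-k)` turns sign alternation into nonnegativity. The order-`2` sequences
are nonnegative multiples of a delta, so they alternate about their support; a divided difference
with positive denominators of a sequence alternating about `c` alternates about `c + 1`, because
`g (k+1) - g k` is then a difference of terms of opposite signs. Hence `μ_l^N` and `β_l^N`
alternate about `l - 1 + (N - 2)` and `l + (N - 2)`, two centres of different parity.
-/

theorem Real.sign_mul_sign_nonpos_of_mul_nonpos {x y : ℝ} (h : x * y ≤ 0) :
    Real.sign x * Real.sign y ≤ 0 := by
  rcases lt_trichotomy x 0 with hx | rfl | hx
  · rcases lt_trichotomy y 0 with hy | rfl | hy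
    · nlinarith
    · simp [Real.sign_zero]
    · simp [Real.sign_of_neg hx, Real.sign_of_pos hy]
  · simp [Real.sign_zero]
  · rcases lt_trichotomy y 0 with hy | rfl | hy
    · simp [Real.sign_of_pos hx, Real.sign_of_neg hy]
    · simp [Real.sign_zero]
    · nlinarith

lemma neg_one_zpow_sub_succ (c k : ℤ) : (-1 : ℝ) ^ (c - (k + 1)) = -(-1 : ℝ) ^ (c - k) := by
  rw [show c - k = c - (k + 1) + 1 by ring, zpow_add_one₀ (by norm_num)]
  ring

def SignAlternating (c : ℤ) (g : ℤ → ℝ) : Prop :=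
  ∀ k, 0 ≤ (-1 : ℝ) ^ (c - k) * g k

namespace SignAlternating

lemma of_eq_zero_of_ne {c : ℤ} {g : ℤ → ℝ} (hg : ∀ k ≠ c, g k = 0) (hc : 0 ≤ g c) :
    SignAlternating c g := by
  intro k
  rcases eq_or_ne k c with rfl | hk
  · simpa using hc
  · simp [hg k hk]

lemma comp_add_one {c : ℤ} {g : ℤ → ℝ} (hg : SignAlternating c g) :
    SignAlternating (c - 1) (fun k => g (k + 1)) := by
  intro k
  simpa [show c - 1 - k = c - (k + 1) by ring] using hg (k + 1)

lemma divDiff {c : ℤ} {g d : ℤ → ℝ} (hg : SignAlternating c g) (hd : ∀ k, 0 < d k) :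
    SignAlternating (c + 1) (fun k => (g (k + 1) - g k) / d k) := by
  intro k
  have hsign : (-1 : ℝ) ^ (c + 1 - k) = -(-1 : ℝ) ^ (c - k) := by
    rw [show c + 1 - k = c - k + 1 by ring, zpow_add_one₀ (by norm_num)]
    ring
  have hnext := hg (k + 1)
  rw [neg_one_zpow_sub_succ] at hnext
  rw [hsign, ← mul_div_assoc]
  exact div_nonneg (by linarith [hg k]) (hd k).le

lemma mul_nonpos {c : ℤ} {g h : ℤ → ℝ} (hg : SignAlternating c g)
    (hh : SignAlternating (c - 1) h) (k : ℤ) : g k * h k ≤ 0 := by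
  have hh' := hh k
  rw [show c - 1 - k = c - (k + 1) by ring, neg_one_zpow_sub_succ] at hh'
  have hsq : ((-1 : ℝ) ^ (c - k)) ^ 2 = 1 := by
    rw [← zpow_natCast, ← zpow_mul, mul_comm, zpow_mul]
    norm_num
  nlinarith [mul_nonneg (hg k) hh']

lemma sign_mul_sign_succ_nonpos {c : ℤ} {g : ℤ → ℝ} (hg : SignAlternating c g) (k : ℤ) :
    Real.sign (g k) * Real.sign (g (k + 1)) ≤ 0 :=
  Real.sign_mul_sign_nonpos_of_mul_nonpos (hg.mul_nonpos hg.comp_add_one k)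

end SignAlternating

lemma liftTwo_signAlternating {t : ℤ → ℝ} (ht : StrictMono t) {c : ℤ} {f : ℤ → ℝ}
    (hf : SignAlternating c f) (m : ℕ) : SignAlternating (c + m) (liftTwo t f m) := by
  induction m with
  | zero => simpa [liftTwo] using hf
  | succ m ih =>
    have hd : ∀ k, 0 < t (k + (m : ℤ) + 3) - t k := fun k => sub_pos.mpr (ht (by omega))
    simpa [liftTwo, add_assoc] using ih.divDiff hd

lemma signAlternating_delta {t : ℤ → ℝ} (ht : StrictMono t) (c : ℤ) :
    SignAlternating c (fun k => if k = c then 1 / (t (k + 2) - t k) else 0) :=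
  SignAlternating.of_eq_zero_of_ne (fun k hk => if_neg hk)
    (by simpa using (sub_pos.mpr (ht (by omega : c < c + 2))).le)

theorem sign_alternation_muSeq_betaSeq_general
    (t : ℤ → ℝ) (ht : StrictMono t) (l : ℤ) (N : ℕ) (k : ℤ) :
    Real.sign (muSeq t l N k) * Real.sign (muSeq t l N (k + 1)) ≤ 0 ∧
    Real.sign (betaSeq t l N k) * Real.sign (betaSeq t l N (k + 1)) ≤ 0 ∧
    Real.sign (muSeq t l N k) * Real.sign (betaSeq t l N k) ≤ 0 := by
  have hμ : SignAlternating (l + (N - 2 : ℕ) - 1) (muSeq t l N) := by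
    rw [← sub_add_eq_add_sub]
    exact liftTwo_signAlternating ht (signAlternating_delta ht (l - 1)) (N - 2)
  have hβ : SignAlternating (l + (N - 2 : ℕ)) (betaSeq t l N) :=
    liftTwo_signAlternating ht (signAlternating_delta ht l) (N - 2)
  refine ⟨hμ.sign_mul_sign_succ_nonpos k, hβ.sign_mul_sign_succ_nonpos k, ?_⟩
  rw [mul_comm]
  exact Real.sign_mul_sign_nonpos_of_mul_nonpos (hβ.mul_nonpos hμ k)

/-- sign alternation of `μ_l^N` and `β_l^N`: consecutive values
have non-strictly opposite signs, and `μ` and `β` have non-strictly opposite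
signs at every index, for all `N ≥ 2`. -/
theorem sign_alternation_muSeq_betaSeq
    (t : ℤ → ℝ) (ht : StrictMono t) (l : ℤ) (N : ℕ) (hN : 2 ≤ N) (k : ℤ) :
    Real.sign (muSeq t l N k) * Real.sign (muSeq t l N (k + 1)) ≤ 0 ∧
    Real.sign (betaSeq t l N k) * Real.sign (betaSeq t l N (k + 1)) ≤ 0 ∧
    Real.sign (muSeq t l N k) * Real.sign (betaSeq t l N k) ≤ 0 :=
  sign_alternation_muSeq_betaSeq_general t ht l N k
end

section
/- With nodes satisfying T_min ≤ t_{k+1}−t_k ≤ T_max, the sequences μ_l^N and β_l^N satisfy 1/(N!·T_max^{N−1}) ≤ |β_l^N[k]| ≤ 1/(N!·T_min^{N−1}) for k ∈ {l−N+2, l}, and 1/(N!·T_max^{N−1}) ≤ |μ_l^N[k]| ≤ 1/(N!·T_min^{N−1}) for k ∈ {l−N+1, l−1}. -/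
lemma gap_bounds (t : ℤ → ℝ) (Tmin Tmax : ℝ)
    (hspace : ∀ k : ℤ, Tmin ≤ t (k + 1) - t k ∧ t (k + 1) - t k ≤ Tmax)
    (k : ℤ) (n : ℕ) : (n : ℝ) * Tmin ≤ t (k + n) - t k ∧ t (k + n) - t k ≤ (n : ℝ) * Tmax := by
  induction n with
  | zero => simp
  | succ n ih =>
    have h := hspace (k + n)
    have e : (k + (n + 1 : ℕ) : ℤ) = k + n + 1 := by push_cast; ring
    rw [e]
    constructor <;> push_cast <;> nlinarith [ih.1, ih.2, h.1, h.2]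

lemma liftTwo_eq_zero (t : ℤ → ℝ) (g : ℤ → ℝ) (K : ℤ)
    (hg : ∀ k, k ≠ K → g k = 0) :
    ∀ m : ℕ, ∀ k : ℤ, (K < k ∨ k + m < K) → liftTwo t g m k = 0 := by
  intro m
  induction m with
  | zero => intro k hk; simp only [liftTwo]; apply hg; push_cast at hk; omega
  | succ m ih =>
    intro k hk
    push_cast at hk
    have h1 : liftTwo t g m (k+1) = 0 := ih _ (by omega)
    have h2 : liftTwo t g m k = 0 := ih _ (by omega)
    simp [liftTwo, h1, h2]

lemma abs_div_step (a D lo hi c d : ℝ) (hc : 0 < c) (hD1 : c ≤ D) (hD2 : D ≤ d)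
    (hlo : 0 ≤ lo) (h1 : lo ≤ |a|) (h2 : |a| ≤ hi) :
    lo / d ≤ |a / D| ∧ |a / D| ≤ hi / c := by
  have hD : 0 < D := lt_of_lt_of_le hc hD1
  have hd : 0 < d := lt_of_lt_of_le hD hD2
  rw [abs_div, abs_of_pos hD]
  constructor
  · calc lo / d ≤ |a| / d := by gcongr
      _ ≤ |a| / D := by gcongr
  · calc |a| / D ≤ |a| / c := by gcongr
      _ ≤ hi / c := by gcongr

lemma edge_bounds_aux (t : ℤ → ℝ) (Tmin Tmax : ℝ) (hTmin : 0 < Tmin)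
    (hspace : ∀ k : ℤ, Tmin ≤ t (k + 1) - t k ∧ t (k + 1) - t k ≤ Tmax)
    (g : ℤ → ℝ) (K : ℤ) (hg : ∀ k, k ≠ K → g k = 0)
    (hgK : g K = 1 / (t (K + 2) - t K)) :
    ∀ m : ℕ, ∀ v : ℝ, (v = liftTwo t g m (K - m) ∨ v = liftTwo t g m K) →
      1 / (((m+2).factorial : ℝ) * Tmax ^ (m+1)) ≤ |v| ∧
      |v| ≤ 1 / (((m+2).factorial : ℝ) * Tmin ^ (m+1)) := by
  have hTmax : 0 < Tmax := lt_of_lt_of_le hTmin (le_trans (hspace 0).1 (hspace 0).2)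
  intro m
  induction m with
  | zero =>
    intro v hv
    have hv' : v = g K := by
      rcases hv with h | h <;> simp [liftTwo] at h <;> simp [h]
    have hb := gap_bounds t Tmin Tmax hspace K 2
    have hpos : 0 < t (K + 2) - t K := by
      have := hb.1; push_cast at this; nlinarith
    have h1 := hb.1; have h2 := hb.2
    push_cast at h1 h2
    have e2 : (((0+2).factorial : ℕ) : ℝ) * Tmax ^ (0+1) = 2 * Tmax := by
      norm_num [Nat.factorial]
    have e2' : (((0+2).factorial : ℕ) : ℝ) * Tmin ^ (0+1) = 2 * Tmin := by
      norm_num [Nat.factorial]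
    rw [hv', hgK, abs_div, abs_of_pos hpos, abs_one, e2, e2']
    constructor
    · exact one_div_le_one_div_of_le hpos (by linarith)
    · exact one_div_le_one_div_of_le (by positivity) (by linarith)
  | succ m ih =>
    intro v hv
    -- denominators span m+3 gaps
    have key : ∀ k : ℤ, ((m:ℝ)+3) * Tmin ≤ t (k + (m:ℤ) + 3) - t k ∧
        t (k + (m:ℤ) + 3) - t k ≤ ((m:ℝ)+3) * Tmax := by
      intro k
      have hb := gap_bounds t Tmin Tmax hspace k (m + 3)
      have e : (k + ((m+3 : ℕ)) : ℤ) = k + m + 3 := by push_cast; ring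
      rw [e] at hb
      constructor
      · have := hb.1; push_cast at this ⊢; linarith
      · have := hb.2; push_cast at this ⊢; linarith
    have hform : ∃ a : ℝ, ∃ k : ℤ, (a = liftTwo t g m (K - m) ∨ a = liftTwo t g m K)
        ∧ |v| = |a / (t (k + (m:ℤ) + 3) - t k)| := by
      rcases hv with h | h
      · refine ⟨liftTwo t g m (K - m), K - (m+1 : ℕ), Or.inl rfl, ?_⟩
        have hz : liftTwo t g m (K - (m+1:ℕ)) = 0 :=
          liftTwo_eq_zero t g K hg m _ (by push_cast; omega)
        have e1 : (K - (m+1:ℕ) + 1 : ℤ) = K - m := by push_cast; ring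
        rw [h]
        simp only [liftTwo, e1, hz, sub_zero]
      · refine ⟨liftTwo t g m K, K, Or.inr rfl, ?_⟩
        have hz : liftTwo t g m (K + 1) = 0 :=
          liftTwo_eq_zero t g K hg m _ (by omega)
        rw [h]
        simp only [liftTwo, hz, zero_sub, neg_div, abs_neg]
    obtain ⟨a, k, ha, hva⟩ := hform
    have iha := ih a ha
    have hk := key k
    have hstep := abs_div_step a (t (k + (m:ℤ) + 3) - t k)
      (1 / (((m+2).factorial : ℝ) * Tmax ^ (m+1)))
      (1 / (((m+2).factorial : ℝ) * Tmin ^ (m+1)))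
      (((m:ℝ)+3) * Tmin) (((m:ℝ)+3) * Tmax)
      (by positivity) hk.1 hk.2 (by positivity) iha.1 iha.2
    rw [hva]
    have efac : ((m+1+2).factorial : ℝ) = ((m:ℝ)+3) * ((m+2).factorial : ℝ) := by
      have : (m+1+2) = (m+2) + 1 := by ring
      rw [this, Nat.factorial_succ]
      push_cast; ring
    constructor
    · refine le_trans (le_of_eq ?_) hstep.1
      rw [efac, pow_succ, div_div]
      ring_nf
    · refine le_trans hstep.2 (le_of_eq ?_)
      rw [efac, pow_succ, div_div]
      ring_nf

/-- edge bounds for `μ_l^N` and `β_l^N` under spacing bounds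
`T_min ≤ t_{k+1} − t_k ≤ T_max`. -/
theorem edge_bounds_muSeq_betaSeq
    (t : ℤ → ℝ) (Tmin Tmax : ℝ) (hTmin : 0 < Tmin)
    (hspace : ∀ k : ℤ, Tmin ≤ t (k + 1) - t k ∧ t (k + 1) - t k ≤ Tmax)
    (l : ℤ) (N : ℕ) (hN : 2 ≤ N) :
    (∀ k : ℤ, k = l - (N : ℤ) + 2 ∨ k = l →
      1 / ((N.factorial : ℝ) * Tmax ^ (N - 1)) ≤ |betaSeq t l N k| ∧
      |betaSeq t l N k| ≤ 1 / ((N.factorial : ℝ) * Tmin ^ (N - 1))) ∧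
    (∀ k : ℤ, k = l - (N : ℤ) + 1 ∨ k = l - 1 →
      1 / ((N.factorial : ℝ) * Tmax ^ (N - 1)) ≤ |muSeq t l N k| ∧
      |muSeq t l N k| ≤ 1 / ((N.factorial : ℝ) * Tmin ^ (N - 1))) := by
  obtain ⟨m, rfl⟩ : ∃ m, N = m + 2 := ⟨N - 2, by omega⟩
  have hsub : m + 2 - 2 = m := by omega
  have hsub1 : m + 2 - 1 = m + 1 := by omega
  constructor
  · intro k hk
    have hb := edge_bounds_aux t Tmin Tmax hTmin hspace
      (fun k => if k = l then 1 / (t (k + 2) - t k) else 0) l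
      (fun k hk => if_neg hk) (if_pos rfl) m (betaSeq t l (m+2) k) ?_
    · rwa [hsub1]
    · unfold betaSeq
      rw [hsub]
      rcases hk with h | h
      · left; congr 1; push_cast at h ⊢; omega
      · right; congr 1
  · intro k hk
    have hb := edge_bounds_aux t Tmin Tmax hTmin hspace
      (fun k => if k = l - 1 then 1 / (t (k + 2) - t k) else 0) (l - 1)
      (fun k hk => if_neg hk) (if_pos rfl) m (muSeq t l (m+2) k) ?_
    · rwa [hsub1]
    · unfold muSeq
      rw [hsub]
      rcases hk with h | h
      · left; congr 1; push_cast at h ⊢; omega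
      · right; congr 1
end

section
/- With nodes satisfying T_min ≤ t_{k+1}−t_k, the middle values satisfy |μ_l^N[l−N+2]| ≤ (N−2)/(N!·T_min^{N−1}) and |β_l^N[l−1]| ≤ (N−2)/(N!·T_min^{N−1}) for all N ≥ 2. -/
section Aux

variable {t : ℤ → ℝ} {Tmin : ℝ}

lemma gap_bound (hTmin : 0 < Tmin) (hspace : ∀ k : ℤ, Tmin ≤ t (k + 1) - t k) :
    ∀ (n : ℕ) (k : ℤ), (n : ℝ) * Tmin ≤ t (k + n) - t k := by
  intro n
  induction n with
  | zero => intro k; simp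
  | succ n ih =>
      intro k
      have h1 := hspace (k + n)
      have h2 := ih k
      have he : (k : ℤ) + (n + 1 : ℕ) = k + n + 1 := by push_cast; ring
      rw [he]
      push_cast
      nlinarith

lemma abs_div_bound {a B c d : ℝ} (hB : |a| ≤ B) (hc : 0 < c) (hcd : c ≤ d) :
    |a / d| ≤ B / c := by
  rw [abs_div, abs_of_pos (lt_of_lt_of_le hc hcd)]
  exact div_le_div₀ (le_trans (abs_nonneg a) hB) hB hc hcd


lemma fact_step (m : ℕ) (Tmin : ℝ) :
    (((m + 3).factorial : ℝ)) * Tmin ^ (m + 1 + 1)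
      = (((m + 2).factorial : ℝ) * Tmin ^ (m + 1)) * (((m : ℝ) + 3) * Tmin) := by
  have h : (m + 3).factorial = (m + 3) * (m + 2).factorial := by
    rw [show m + 3 = (m + 2) + 1 from rfl, Nat.factorial_succ]
  rw [h, Nat.cast_mul, pow_succ]
  have h2 : ((m + 3 : ℕ) : ℝ) = (m : ℝ) + 3 := by push_cast; ring
  rw [h2]; ring

variable (hTmin : 0 < Tmin) (hspace : ∀ k : ℤ, Tmin ≤ t (k + 1) - t k)
variable {K : ℤ} {f : ℤ → ℝ} (hf0 : ∀ k, k ≠ K → f k = 0)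
    (hfb : |f K| ≤ 1 / (2 * Tmin))

include hTmin hspace in
lemma denom_bound (m : ℕ) (k : ℤ) :
    ((m : ℝ) + 3) * Tmin ≤ t (k + (m : ℤ) + 3) - t k := by
  have := gap_bound hTmin hspace (m + 3) k
  have he : (k : ℤ) + ((m + 3 : ℕ) : ℤ) = k + m + 3 := by push_cast; ring
  rw [he] at this
  push_cast at this
  linarith

include hf0 in
lemma lift_left_zero : ∀ (m : ℕ) (k : ℤ), k < K - m → liftTwo t f m k = 0 := by
  intro m
  induction m with
  | zero => intro k hk; exact hf0 k (by push_cast at hk; omega)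
  | succ m ih =>
      intro k hk
      push_cast at hk
      have h1 : liftTwo t f m (k + 1) = 0 := ih _ (by push_cast; omega)
      have h2 : liftTwo t f m k = 0 := ih _ (by push_cast; omega)
      simp only [liftTwo, h1, h2, sub_self, zero_div]

include hf0 in
lemma lift_right_zero : ∀ (m : ℕ) (k : ℤ), K < k → liftTwo t f m k = 0 := by
  intro m
  induction m with
  | zero => intro k hk; exact hf0 k hk.ne'
  | succ m ih =>
      intro k hk
      have h1 : liftTwo t f m (k + 1) = 0 := ih _ (by omega)
      have h2 : liftTwo t f m k = 0 := ih _ hk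
      simp only [liftTwo, h1, h2, sub_self, zero_div]

include hTmin hspace hf0 hfb in
lemma lift_left_edge : ∀ (m : ℕ),
    |liftTwo t f m (K - m)| ≤ 1 / (((m + 2).factorial : ℝ) * Tmin ^ (m + 1)) := by
  intro m
  induction m with
  | zero => simpa [liftTwo, Nat.factorial] using hfb
  | succ m ih =>
      have hz : liftTwo t f m (K - ((m : ℤ) + 1)) = 0 :=
        lift_left_zero hf0 m _ (by omega)
      have he : (K - ((m : ℤ) + 1) + 1 : ℤ) = K - m := by ring
      have hd := denom_bound hTmin hspace m (K - ((m : ℤ) + 1))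
      have hc : (0 : ℝ) < ((m : ℝ) + 3) * Tmin := by positivity
      have hcast : (K : ℤ) - ((m + 1 : ℕ) : ℤ) = K - ((m : ℤ) + 1) := by push_cast; ring
      rw [show (m + 1 : ℕ) + 2 = m + 3 from rfl]
      simp only [liftTwo, hcast, he, hz, sub_zero]
      calc |liftTwo t f m (K - (m : ℤ)) / (t (K - ((m : ℤ) + 1) + (m : ℤ) + 3) - t (K - ((m : ℤ) + 1)))|
          ≤ (1 / (((m + 2).factorial : ℝ) * Tmin ^ (m + 1))) / (((m : ℝ) + 3) * Tmin) :=
            abs_div_bound ih hc hd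
        _ = 1 / (((m + 3).factorial : ℝ) * Tmin ^ (m + 1 + 1)) := by
            rw [div_div, fact_step]

include hTmin hspace hf0 hfb in
lemma lift_right_edge : ∀ (m : ℕ),
    |liftTwo t f m K| ≤ 1 / (((m + 2).factorial : ℝ) * Tmin ^ (m + 1)) := by
  intro m
  induction m with
  | zero => simpa [liftTwo, Nat.factorial] using hfb
  | succ m ih =>
      have hz : liftTwo t f m (K + 1) = 0 := lift_right_zero hf0 m _ (by omega)
      have hd := denom_bound hTmin hspace m K
      have hc : (0 : ℝ) < ((m : ℝ) + 3) * Tmin := by positivity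
      rw [show (m + 1 : ℕ) + 2 = m + 3 from rfl]
      simp only [liftTwo, hz, zero_sub, abs_neg]
      have : |(- liftTwo t f m K) / (t (K + (m : ℤ) + 3) - t K)|
          ≤ (1 / (((m + 2).factorial : ℝ) * Tmin ^ (m + 1))) / (((m : ℝ) + 3) * Tmin) :=
        abs_div_bound (by simpa using ih) hc hd
      calc |(- liftTwo t f m K) / (t (K + (m : ℤ) + 3) - t K)|
          ≤ (1 / (((m + 2).factorial : ℝ) * Tmin ^ (m + 1))) / (((m : ℝ) + 3) * Tmin) := this
        _ = 1 / (((m + 3).factorial : ℝ) * Tmin ^ (m + 1 + 1)) := by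
            rw [div_div, fact_step]

include hTmin hspace hf0 hfb in
lemma lift_left_middle : ∀ (m : ℕ),
    |liftTwo t f m (K - m + 1)| ≤ (m : ℝ) / (((m + 2).factorial : ℝ) * Tmin ^ (m + 1)) := by
  intro m
  induction m with
  | zero =>
      simp only [liftTwo, Nat.cast_zero, sub_zero]
      rw [hf0 (K + 1) (by omega)]
      simp
  | succ m ih =>
      have hd := denom_bound hTmin hspace m (K - (m : ℤ))
      have hc : (0 : ℝ) < ((m : ℝ) + 3) * Tmin := by positivity
      have hcast : (K : ℤ) - ((m + 1 : ℕ) : ℤ) + 1 = K - ((m : ℤ) + 1) + 1 := by push_cast; ring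
      have he : (K - ((m : ℤ) + 1) + 1 + 1 : ℤ) = K - m + 1 := by ring
      have he2 : (K - ((m : ℤ) + 1) + 1 : ℤ) = K - m := by ring
      rw [show (m + 1 : ℕ) + 2 = m + 3 from rfl]
      simp only [liftTwo, hcast, he, he2]
      have hedge := lift_left_edge hTmin hspace hf0 hfb m
      have hnum : |liftTwo t f m (K - (m : ℤ) + 1) - liftTwo t f m (K - (m : ℤ))|
          ≤ ((m : ℝ) + 1) / (((m + 2).factorial : ℝ) * Tmin ^ (m + 1)) := by
        calc |liftTwo t f m (K - (m : ℤ) + 1) - liftTwo t f m (K - (m : ℤ))|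
            ≤ |liftTwo t f m (K - (m : ℤ) + 1)| + |liftTwo t f m (K - (m : ℤ))| :=
              abs_sub _ _
          _ ≤ (m : ℝ) / (((m + 2).factorial : ℝ) * Tmin ^ (m + 1))
              + 1 / (((m + 2).factorial : ℝ) * Tmin ^ (m + 1)) := add_le_add ih hedge
          _ = ((m : ℝ) + 1) / (((m + 2).factorial : ℝ) * Tmin ^ (m + 1)) := by
              rw [← add_div]
      calc |(liftTwo t f m (K - (m : ℤ) + 1) - liftTwo t f m (K - (m : ℤ)))
              / (t (K - (m : ℤ) + (m : ℤ) + 3) - t (K - (m : ℤ)))|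
          ≤ (((m : ℝ) + 1) / (((m + 2).factorial : ℝ) * Tmin ^ (m + 1))) / (((m : ℝ) + 3) * Tmin) :=
            abs_div_bound hnum hc hd
        _ = ((m + 1 : ℕ) : ℝ) / (((m + 3).factorial : ℝ) * Tmin ^ (m + 1 + 1)) := by
            rw [div_div, fact_step, Nat.cast_add, Nat.cast_one]

include hTmin hspace hf0 hfb in
lemma lift_right_middle : ∀ (m : ℕ),
    |liftTwo t f m (K - 1)| ≤ (m : ℝ) / (((m + 2).factorial : ℝ) * Tmin ^ (m + 1)) := by
  intro m
  induction m with
  | zero =>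
      simp only [liftTwo, Nat.cast_zero]
      rw [hf0 (K - 1) (by omega)]
      simp
  | succ m ih =>
      have hd := denom_bound hTmin hspace m (K - 1)
      have hc : (0 : ℝ) < ((m : ℝ) + 3) * Tmin := by positivity
      have he : (K - 1 + 1 : ℤ) = K := by ring
      rw [show (m + 1 : ℕ) + 2 = m + 3 from rfl]
      simp only [liftTwo, he]
      have hedge := lift_right_edge hTmin hspace hf0 hfb m
      have hnum : |liftTwo t f m K - liftTwo t f m (K - 1)|
          ≤ ((m : ℝ) + 1) / (((m + 2).factorial : ℝ) * Tmin ^ (m + 1)) := by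
        calc |liftTwo t f m K - liftTwo t f m (K - 1)|
            ≤ |liftTwo t f m K| + |liftTwo t f m (K - 1)| := abs_sub _ _
          _ ≤ 1 / (((m + 2).factorial : ℝ) * Tmin ^ (m + 1))
              + (m : ℝ) / (((m + 2).factorial : ℝ) * Tmin ^ (m + 1)) := add_le_add hedge ih
          _ = ((m : ℝ) + 1) / (((m + 2).factorial : ℝ) * Tmin ^ (m + 1)) := by
              rw [← add_div]; ring_nf
      calc |(liftTwo t f m K - liftTwo t f m (K - 1)) / (t (K - 1 + (m : ℤ) + 3) - t (K - 1))|
          ≤ (((m : ℝ) + 1) / (((m + 2).factorial : ℝ) * Tmin ^ (m + 1))) / (((m : ℝ) + 3) * Tmin) :=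
            abs_div_bound hnum hc hd
        _ = ((m + 1 : ℕ) : ℝ) / (((m + 3).factorial : ℝ) * Tmin ^ (m + 1 + 1)) := by
            rw [div_div, fact_step, Nat.cast_add, Nat.cast_one]

end Aux

/-- bounds on the second-from-edge (middle) values of
`μ_l^N` and `β_l^N` under the lower spacing bound `T_min ≤ t_{k+1} − t_k`. -/
theorem middle_bounds_muSeq_betaSeq
    (t : ℤ → ℝ) (Tmin : ℝ) (hTmin : 0 < Tmin)
    (hspace : ∀ k : ℤ, Tmin ≤ t (k + 1) - t k)
    (l : ℤ) (N : ℕ) (hN : 2 ≤ N) :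
    |muSeq t l N (l - (N : ℤ) + 2)| ≤ ((N : ℝ) - 2) / ((N.factorial : ℝ) * Tmin ^ (N - 1)) ∧
    |betaSeq t l N (l - 1)| ≤ ((N : ℝ) - 2) / ((N.factorial : ℝ) * Tmin ^ (N - 1)) := by
  classical
  obtain ⟨m, rfl⟩ := Nat.exists_eq_add_of_le hN
  set fmu : ℤ → ℝ := fun k => if k = l - 1 then 1 / (t (k + 2) - t k) else 0 with hfmu
  set fbe : ℤ → ℝ := fun k => if k = l then 1 / (t (k + 2) - t k) else 0 with hfbe
  have hbnd : ∀ K : ℤ, |1 / (t (K + 2) - t K)| ≤ 1 / (2 * Tmin) := by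
    intro K
    have hg := gap_bound hTmin hspace 2 K
    push_cast at hg
    have hd : (0 : ℝ) < t (K + 2) - t K := by nlinarith
    rw [abs_div, abs_one, abs_of_pos hd]
    exact one_div_le_one_div_of_le (by nlinarith) (by linarith)
  have hmu0 : ∀ k, k ≠ l - 1 → fmu k = 0 := fun k hk => if_neg hk
  have hmub : |fmu (l - 1)| ≤ 1 / (2 * Tmin) := by
    simp only [hfmu, if_pos rfl]; exact hbnd (l - 1)
  have hbe0 : ∀ k, k ≠ l → fbe k = 0 := fun k hk => if_neg hk
  have hbeb : |fbe l| ≤ 1 / (2 * Tmin) := by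
    simp only [hfbe, if_pos rfl]; exact hbnd l
  have h1 := lift_left_middle hTmin hspace hmu0 hmub m
  have h2 := lift_right_middle hTmin hspace hbe0 hbeb m
  have hNm : 2 + m - 2 = m := by omega
  have hNm1 : 2 + m - 1 = m + 1 := by omega
  have hNfac : (2 + m).factorial = (m + 2).factorial := by rw [Nat.add_comm]
  have hidx : l - ((2 + m : ℕ) : ℤ) + 2 = (l - 1) - (m : ℤ) + 1 := by push_cast; ring
  have hC : ((2 + m : ℕ) : ℝ) - 2 = (m : ℝ) := by push_cast; ring
  constructor
  · rw [muSeq, hNm, hidx, hC, hNfac, hNm1]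
    exact h1
  · rw [betaSeq, hNm, hC, hNfac, hNm1]
    exact h2
end

section
/- Let f1, f2 : [0,1] → ℝ be f1(x) = a·x and f2(x) = |b·x − c·(1−x)|, with a, b, c > 0. Then min_{x∈[0,1]} max{f1(x), f2(x)} ≥ (a·c)/(a + b + c). -/
/-- with `f1 x = a·x` and `f2 x = |b·x − c·(1−x)|` and `a,b,c > 0`,
the pointwise maximum of `f1` and `f2` is at least `a·c/(a+b+c)` on `[0,1]`. -/
theorem minmax_threshold_bound (a b c : ℝ) (ha : 0 < a) (hb : 0 < b) (hc : 0 < c) :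
    ∀ x ∈ Set.Icc (0 : ℝ) 1, a * c / (a + b + c) ≤ max (a * x) |b * x - c * (1 - x)| := by
  intro x hx
  have hs : 0 < a + b + c := by linarith
  rcases le_or_gt (c / (a + b + c)) x with h | h
  · refine le_max_of_le_left ?_
    rw [div_le_iff₀ hs]
    have := (div_le_iff₀ hs).mp h
    nlinarith
  · refine le_max_of_le_right ?_
    have h' := (lt_div_iff₀ hs).mp h
    have hneg : b * x - c * (1 - x) ≤ 0 := by nlinarith
    rw [abs_of_nonpos hneg, div_le_iff₀ hs]
    nlinarith
end

section
/- Suppose an ASDM with Schmitt trigger parameters δ, b > 0 receives an input bounded by λ < b, i.e. |x(t)| ≤ λ. Then the consecutive trigger times, which satisfy ∫_{t_k}^{t_{k+1}} (x(s) + (−1)^k b) ds = (−1)^k 2δ, obey 2δ/(b+λ) ≤ t_{k+1} − t_k ≤ 2δ/(b−λ). -/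
open intervalIntegral

/-- bounds on the inter-trigger intervals of an ASDM with Schmitt
trigger parameters `δ, b` driven by an input bounded by `λ < b`. -/
theorem asdm_trigger_spacing
    (x : ℝ → ℝ) (lam b δ : ℝ) (hlam : 0 < lam) (hlb : lam < b) (hδ : 0 < δ)
    (hx : Continuous x) (hbnd : ∀ s : ℝ, |x s| ≤ lam)
    (t : ℕ → ℝ) (hmono : StrictMono t)
    (ht : ∀ k : ℕ, ∫ s in (t k)..(t (k + 1)), (x s + (-1 : ℝ) ^ k * b) =
      (-1 : ℝ) ^ k * 2 * δ) :
    ∀ k : ℕ, 2 * δ / (b + lam) ≤ t (k + 1) - t k ∧ t (k + 1) - t k ≤ 2 * δ / (b - lam) := by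
  intro k
  set Δ := t (k + 1) - t k with hΔ
  have hΔpos : 0 < Δ := sub_pos.mpr (hmono (Nat.lt_succ_self k))
  have hint : IntervalIntegrable x MeasureTheory.volume (t k) (t (k + 1)) :=
    hx.intervalIntegrable _ _
  have hsplit : (∫ s in (t k)..(t (k + 1)), (x s + (-1 : ℝ) ^ k * b)) =
      (∫ s in (t k)..(t (k + 1)), x s) + (-1 : ℝ) ^ k * b * Δ := by
    rw [intervalIntegral.integral_add hint (intervalIntegrable_const)]
    simp [hΔ]; ring
  have hIx : (∫ s in (t k)..(t (k + 1)), x s) =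
      (-1 : ℝ) ^ k * 2 * δ - (-1 : ℝ) ^ k * b * Δ := by
    have := ht k
    rw [hsplit] at this
    linarith
  have hbound : |∫ s in (t k)..(t (k + 1)), x s| ≤ lam * Δ := by
    have := intervalIntegral.norm_integral_le_of_norm_le_const
      (C := lam) (f := x) (a := t k) (b := t (k + 1))
      (fun s _ => by simpa using hbnd s)
    rw [show |t (k+1) - t k| = Δ from abs_of_pos hΔpos] at this
    simpa [Real.norm_eq_abs] using this
  rw [hIx] at hbound
  have hfac : |(-1 : ℝ) ^ k * 2 * δ - (-1 : ℝ) ^ k * b * Δ| =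
      |2 * δ - b * Δ| := by
    have : (-1 : ℝ) ^ k * 2 * δ - (-1 : ℝ) ^ k * b * Δ =
        (-1 : ℝ) ^ k * (2 * δ - b * Δ) := by ring
    rw [this, abs_mul, abs_pow, abs_neg, abs_one, one_pow, one_mul]
  rw [hfac, abs_le] at hbound
  constructor
  · rw [div_le_iff₀ (by linarith)]
    nlinarith [hbound.2]
  · rw [le_div_iff₀ (by linarith)]
    nlinarith [hbound.1]
end

section
/- Under the spacing bound t_{k+1} − t_k ≤ T_max < π/Ω and convergence estimates ‖g − g_n‖_{L²} ≤ (T_maxΩ/π)^{n+1}‖g‖_{L²} and ‖e_0‖_{L²} ≤ 2R · 2λ_h·T_max · √(Ω/π), the total reconstruction error satisfies ‖g − g̃_n‖_{L²} ≤ (4λ_h·R·T_max·√(Ωπ))/(π − T_maxΩ) + (T_maxΩ/π)^{n+1}·‖g‖_{L²}. -/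
open Real

theorem Real.sqrt_div_div_one_sub_div {c : ℝ} (hc : 0 < c) (x y : ℝ) :
    √(x / c) / (1 - y / c) = √(x * c) / (c - y) := by
  have hsqrt : √(x * c) = c * √(x / c) := by
    rw [show x * c = c ^ 2 * (x / c) by field_simp, Real.sqrt_mul (sq_nonneg c),
      Real.sqrt_sq hc.le]
  rw [hsqrt, one_sub_div hc.ne', div_div_eq_mul_div, mul_comm]

theorem total_reconstruction_error_bound_general
    {H : Type*} [NormedAddCommGroup H]
    (Tmax Ω lamh : ℝ) (R : ℕ)
    (g : H) (gn gtn : ℕ → H)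
    (hconv : ∀ n : ℕ, ‖g - gn n‖ ≤ (Tmax * Ω / π) ^ (n + 1) * ‖g‖)
    (herr : ∀ n : ℕ, ‖gtn n - gn n‖ ≤
      (2 * (R : ℝ) * (2 * lamh * Tmax) * Real.sqrt (Ω / π)) / (1 - Tmax * Ω / π)) :
    ∀ n : ℕ, ‖g - gtn n‖ ≤
      4 * lamh * (R : ℝ) * Tmax * Real.sqrt (Ω * π) / (π - Tmax * Ω) +
        (Tmax * Ω / π) ^ (n + 1) * ‖g‖ := by
  intro n
  have hconst : (2 * (R : ℝ) * (2 * lamh * Tmax) * √(Ω / π)) / (1 - Tmax * Ω / π)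
      = 4 * lamh * (R : ℝ) * Tmax * √(Ω * π) / (π - Tmax * Ω) := by
    rw [mul_div_assoc, Real.sqrt_div_div_one_sub_div pi_pos, ← mul_div_assoc]
    ring
  calc ‖g - gtn n‖ ≤ ‖g - gn n‖ + ‖gtn n - gn n‖ := by
        simpa only [dist_eq_norm] using dist_triangle_right g (gtn n) (gn n)
    _ ≤ (Tmax * Ω / π) ^ (n + 1) * ‖g‖ + 4 * lamh * (R : ℝ) * Tmax * √(Ω * π) / (π - Tmax * Ω) :=
      add_le_add (hconv n) (hconst ▸ herr n)
    _ = _ := add_comm _ _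

/-- total reconstruction error bound, combining the geometric
error bound on the iteration error `e_n = g̃_n − g_n` with the convergence of
the ideal iteration `g_n → g`. -/
theorem total_reconstruction_error_bound
    {H : Type*} [NormedAddCommGroup H]
    (Tmax Ω lamh : ℝ) (R : ℕ)
    (hTmax : 0 < Tmax) (hΩ : 0 < Ω) (hlamh : 0 < lamh)
    (hnyq : Tmax * Ω < π)
    (g : H) (gn gtn : ℕ → H)
    (hconv : ∀ n : ℕ, ‖g - gn n‖ ≤ (Tmax * Ω / π) ^ (n + 1) * ‖g‖)
    (herr : ∀ n : ℕ, ‖gtn n - gn n‖ ≤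
      (2 * (R : ℝ) * (2 * lamh * Tmax) * Real.sqrt (Ω / π)) / (1 - Tmax * Ω / π)) :
    ∀ n : ℕ, ‖g - gtn n‖ ≤
      4 * lamh * (R : ℝ) * Tmax * Real.sqrt (Ω * π) / (π - Tmax * Ω) +
        (Tmax * Ω / π) ^ (n + 1) * ‖g‖ :=
  total_reconstruction_error_bound_general Tmax Ω lamh R g gn gtn hconv herr
end
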